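/- (Bortolotti invariants, intersection angle and geodesic curvatures.) Let r : ℝ² → ℝ³ be C^∞ on an open set U ⊆ ℝ² with I₁₁ > 0, I₂₂ > 0 and Δ := I₁₁I₂₂ − I₁₂² > 0 on U, and let ω : ℝ² → ℝ be C^∞ on U with 0 < ω < π, cos ω = I₁₂/√(I₁₁I₂₂) (hence sin ω = √(Δ/(I₁₁I₂₂))). Define n := (r_x × r_y)/√Δ, the geodesic curvatures κ_g1 := det(r_x, r_xx, n)/I₁₁^{3/2} and κ_g2 := det(r_y, r_yy, n)/I₂₂^{3/2} (det denotes the triple product), and π₁ := (I₂₂(r_x·r_xy) − I₁₂(r_y·r_xy))/(Δ√I₂₂), π₂ := (I₁₁(r_y·r_xy) − I₁₂(r_x·r_xy))/(Δ√I₁₁). Then on U: π₁ sin ω + ω_x/√I₁₁ = −κ_g1 and π₂ sin ω + ω_y/√I₂₂ = κ_g2. -/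

import Mathlib

open scoped Matrix

local notation "∞∞" => ((⊤ : ℕ∞) : WithTop ℕ∞)

noncomputable def Dx {E : Type*} [NormedAddCommGroup E] [NormedSpace ℝ E]
    (f : ℝ × ℝ → E) (p : ℝ × ℝ) : E := fderiv ℝ f p (1, 0)

noncomputable def Dy {E : Type*} [NormedAddCommGroup E] [NormedSpace ℝ E]
    (f : ℝ × ℝ → E) (p : ℝ × ℝ) : E := fderiv ℝ f p (0, 1)

/-- Triple product `det(u,v,w) = u·(v × w)` in `ℝ³`. -/
noncomputable def triple (u v w : Fin 3 → ℝ) : ℝ := u ⬝ᵥ (v ⨯₃ w)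

noncomputable def I11 (r : ℝ × ℝ → Fin 3 → ℝ) (p : ℝ × ℝ) : ℝ := Dx r p ⬝ᵥ Dx r p
noncomputable def I12 (r : ℝ × ℝ → Fin 3 → ℝ) (p : ℝ × ℝ) : ℝ := Dx r p ⬝ᵥ Dy r p
noncomputable def I22 (r : ℝ × ℝ → Fin 3 → ℝ) (p : ℝ × ℝ) : ℝ := Dy r p ⬝ᵥ Dy r p
noncomputable def Δdet (r : ℝ × ℝ → Fin 3 → ℝ) (p : ℝ × ℝ) : ℝ :=
  I11 r p * I22 r p - (I12 r p) ^ 2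

/-- The unit normal vector `n = (r_x × r_y)/√Δ`. -/
noncomputable def nvec (r : ℝ × ℝ → Fin 3 → ℝ) (p : ℝ × ℝ) : Fin 3 → ℝ :=
  (Real.sqrt (Δdet r p))⁻¹ • (Dx r p ⨯₃ Dy r p)

/-- Geodesic curvature of the `x`-curves. -/
noncomputable def κg1 (r : ℝ × ℝ → Fin 3 → ℝ) (p : ℝ × ℝ) : ℝ :=
  triple (Dx r p) (Dx (Dx r) p) (nvec r p) / (I11 r p) ^ ((3:ℝ)/2)

/-- Geodesic curvature of the `y`-curves. -/
noncomputable def κg2 (r : ℝ × ℝ → Fin 3 → ℝ) (p : ℝ × ℝ) : ℝ :=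
  triple (Dy r p) (Dy (Dy r) p) (nvec r p) / (I22 r p) ^ ((3:ℝ)/2)

/-- The Bortolotti invariants `π₁`, `π₂`. -/
noncomputable def π1 (r : ℝ × ℝ → Fin 3 → ℝ) (p : ℝ × ℝ) : ℝ :=
  (I22 r p * (Dx r p ⬝ᵥ Dy (Dx r) p) - I12 r p * (Dy r p ⬝ᵥ Dy (Dx r) p))
    / (Δdet r p * Real.sqrt (I22 r p))
noncomputable def π2 (r : ℝ × ℝ → Fin 3 → ℝ) (p : ℝ × ℝ) : ℝ :=
  (I11 r p * (Dy r p ⬝ᵥ Dy (Dx r) p) - I12 r p * (Dx r p ⬝ᵥ Dy (Dx r) p))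
    / (Δdet r p * Real.sqrt (I11 r p))

/-! ### Auxiliary lemmas -/

lemma contDiffOn_Dx' {E : Type*} [NormedAddCommGroup E] [NormedSpace ℝ E]
    {U : Set (ℝ × ℝ)} (hU : IsOpen U) {f : ℝ × ℝ → E} (hf : ContDiffOn ℝ ∞∞ f U) :
    ContDiffOn ℝ ∞∞ (Dx f) U := by
  have h := hf.fderiv_of_isOpen hU (le_of_eq (rfl : ∞∞ + 1 = ∞∞))
  exact (ContinuousLinearMap.apply ℝ E ((1:ℝ),(0:ℝ))).contDiff.comp_contDiffOn h

lemma contDiffOn_Dy' {E : Type*} [NormedAddCommGroup E] [NormedSpace ℝ E]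
    {U : Set (ℝ × ℝ)} (hU : IsOpen U) {f : ℝ × ℝ → E} (hf : ContDiffOn ℝ ∞∞ f U) :
    ContDiffOn ℝ ∞∞ (Dy f) U := by
  have h := hf.fderiv_of_isOpen hU (le_of_eq (rfl : ∞∞ + 1 = ∞∞))
  exact (ContinuousLinearMap.apply ℝ E ((0:ℝ),(1:ℝ))).contDiff.comp_contDiffOn h

lemma hasFDerivAt_dot {f g : ℝ × ℝ → Fin 3 → ℝ} {p : ℝ × ℝ}
    (hf : DifferentiableAt ℝ f p) (hg : DifferentiableAt ℝ g p) :
    HasFDerivAt (fun q => f q ⬝ᵥ g q)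
      (∑ i : Fin 3, (f p i • (ContinuousLinearMap.proj i).comp (fderiv ℝ g p)
        + g p i • (ContinuousLinearMap.proj i).comp (fderiv ℝ f p))) p := by
  have : (fun q => f q ⬝ᵥ g q) = fun q => ∑ i : Fin 3, f q i * g q i := by
    funext q; simp [dotProduct]
  rw [this]
  apply HasFDerivAt.fun_sum
  intro i _
  exact (((ContinuousLinearMap.proj (R := ℝ) (φ := fun _ : Fin 3 => ℝ) i).hasFDerivAt.comp p hf.hasFDerivAt).fun_mul
    ((ContinuousLinearMap.proj (R := ℝ) (φ := fun _ : Fin 3 => ℝ) i).hasFDerivAt.comp p hg.hasFDerivAt))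

lemma fderiv_dot {f g : ℝ × ℝ → Fin 3 → ℝ} {p : ℝ × ℝ}
    (hf : DifferentiableAt ℝ f p) (hg : DifferentiableAt ℝ g p) (v : ℝ × ℝ) :
    fderiv ℝ (fun q => f q ⬝ᵥ g q) p v
      = fderiv ℝ f p v ⬝ᵥ g p + f p ⬝ᵥ fderiv ℝ g p v := by
  rw [(hasFDerivAt_dot hf hg).fderiv]
  simp [dotProduct, Finset.sum_add_distrib, mul_comm]
  exact add_comm _ _

lemma triple_cross (u v w z : Fin 3 → ℝ) :
    triple u v (w ⨯₃ z) = (u ⬝ᵥ w) * (v ⬝ᵥ z) - (u ⬝ᵥ z) * (v ⬝ᵥ w) := by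
  simp [triple, crossProduct, dotProduct, Fin.sum_univ_three]
  ring

lemma triple_smul (u v : Fin 3 → ℝ) (c : ℝ) (w : Fin 3 → ℝ) :
    triple u v (c • w) = c * triple u v w := by
  simp [triple, LinearMap.map_smul, dotProduct_smul]

set_option maxHeartbeats 1000000 in
/-- **Bortolotti invariants, intersection angle and geodesic curvatures:**
`π₁ sin ω + ω_x/√I₁₁ = −κ_g1` and `π₂ sin ω + ω_y/√I₂₂ = κ_g2` on `U`. -/
theorem bortolotti_geodesic_curvature_relations
    (U : Set (ℝ × ℝ)) (hU : IsOpen U)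
    (r : ℝ × ℝ → Fin 3 → ℝ) (hr : ContDiffOn ℝ (⊤ : ℕ∞) r U)
    (ω : ℝ × ℝ → ℝ) (hω : ContDiffOn ℝ (⊤ : ℕ∞) ω U)
    (h11 : ∀ p ∈ U, 0 < I11 r p) (h22 : ∀ p ∈ U, 0 < I22 r p)
    (hΔ : ∀ p ∈ U, 0 < Δdet r p)
    (hω0 : ∀ p ∈ U, 0 < ω p) (hωπ : ∀ p ∈ U, ω p < Real.pi)
    (hcos : ∀ p ∈ U, Real.cos (ω p) = I12 r p / Real.sqrt (I11 r p * I22 r p)) :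
    ∀ p ∈ U,
      π1 r p * Real.sin (ω p) + Dx ω p / Real.sqrt (I11 r p) = -κg1 r p
      ∧ π2 r p * Real.sin (ω p) + Dy ω p / Real.sqrt (I22 r p) = κg2 r p := by
  intro p hp
  have hpU : U ∈ nhds p := hU.mem_nhds hp
  have hr' : ContDiffOn ℝ ∞∞ r U := hr.of_le (by simp)
  have hω' : ContDiffOn ℝ ∞∞ ω U := hω.of_le (by simp)
  have ha : ContDiffOn ℝ ∞∞ (Dx r) U := contDiffOn_Dx' hU hr'
  have hb : ContDiffOn ℝ ∞∞ (Dy r) U := contDiffOn_Dy' hU hr'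
  have haD : DifferentiableAt ℝ (Dx r) p := (ha.contDiffAt hpU).differentiableAt (by simp)
  have hbD : DifferentiableAt ℝ (Dy r) p := (hb.contDiffAt hpU).differentiableAt (by simp)
  have hωD : DifferentiableAt ℝ ω p := (hω'.contDiffAt hpU).differentiableAt (by simp)
  have hA : 0 < I11 r p := h11 p hp
  have hB : 0 < I22 r p := h22 p hp
  have hΔp : 0 < Δdet r p := hΔ p hp
  -- Schwarz symmetry of second derivatives
  have hfdD : DifferentiableAt ℝ (fderiv ℝ r) p :=
    (((hr'.fderiv_of_isOpen hU (le_of_eq (rfl : ∞∞ + 1 = ∞∞))).contDiffAt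
      hpU)).differentiableAt (by simp)
  have hsymm : IsSymmSndFDerivAt ℝ r p := (hr.contDiffAt hpU).isSymmSndFDerivAt (by simp; exact WithTop.coe_le_coe.2 le_top)
  have hDxy : Dx (Dy r) p = Dy (Dx r) p := by
    have h1 : Dx (Dy r) p = fderiv ℝ (fderiv ℝ r) p (1,0) (0,1) := by
      show fderiv ℝ (fun q => fderiv ℝ r q (0,1)) p (1,0) = _
      rw [fderiv_clm_apply hfdD (differentiableAt_const _)]
      simp
    have h2 : Dy (Dx r) p = fderiv ℝ (fderiv ℝ r) p (0,1) (1,0) := by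
      show fderiv ℝ (fun q => fderiv ℝ r q (1,0)) p (0,1) = _
      rw [fderiv_clm_apply hfdD (differentiableAt_const _)]
      simp
    rw [h1, h2, hsymm (1,0) (0,1)]
  -- derivative of the first fundamental coefficients
  have h11' : HasFDerivAt (fun q => Dx r q ⬝ᵥ Dx r q)
      (fderiv ℝ (fun q => Dx r q ⬝ᵥ Dx r q) p) p :=
    ((hasFDerivAt_dot haD haD).differentiableAt).hasFDerivAt
  have h12' : HasFDerivAt (fun q => Dx r q ⬝ᵥ Dy r q)
      (fderiv ℝ (fun q => Dx r q ⬝ᵥ Dy r q) p) p :=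
    ((hasFDerivAt_dot haD hbD).differentiableAt).hasFDerivAt
  have h22' : HasFDerivAt (fun q => Dy r q ⬝ᵥ Dy r q)
      (fderiv ℝ (fun q => Dy r q ⬝ᵥ Dy r q) p) p :=
    ((hasFDerivAt_dot hbD hbD).differentiableAt).hasFDerivAt
  have hABpos : 0 < I11 r p * I22 r p := mul_pos hA hB
  have hABne : (Dx r p ⬝ᵥ Dx r p) * (Dy r p ⬝ᵥ Dy r p) ≠ 0 := hABpos.ne'
  have hGpos : 0 < Real.sqrt (I11 r p * I22 r p) := Real.sqrt_pos.2 hABpos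
  have hGne : Real.sqrt ((Dx r p ⬝ᵥ Dx r p) * (Dy r p ⬝ᵥ Dy r p)) ≠ 0 := hGpos.ne'
  have hH := h11'.fun_mul h22'
  have hsq := hH.sqrt hABne
  have hinv := (hasDerivAt_inv hGne).comp_hasFDerivAt p hsq
  simp only [Function.comp_def] at hinv
  have hF := h12'.fun_mul hinv
  -- the key derivative computation
  have hvalx : fderiv ℝ (fun q => (Dx r q ⬝ᵥ Dy r q)
        * (Real.sqrt ((Dx r q ⬝ᵥ Dx r q) * (Dy r q ⬝ᵥ Dy r q)))⁻¹) p (1, 0)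
      = (Dx (Dx r) p ⬝ᵥ Dy r p + Dx r p ⬝ᵥ Dx (Dy r) p) / Real.sqrt (I11 r p * I22 r p)
        - I12 r p * (I11 r p * (Dx (Dy r) p ⬝ᵥ Dy r p + Dy r p ⬝ᵥ Dx (Dy r) p)
            + I22 r p * (Dx (Dx r) p ⬝ᵥ Dx r p + Dx r p ⬝ᵥ Dx (Dx r) p))
          / (2 * Real.sqrt (I11 r p * I22 r p) ^ 3) := by
    rw [hF.fderiv]
    simp only [ContinuousLinearMap.add_apply, ContinuousLinearMap.smul_apply, smul_eq_mul]
    rw [fderiv_dot haD hbD, fderiv_dot haD haD, fderiv_dot hbD hbD]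
    simp only [Dx, Dy, I11, I12, I22]
    ring
  have hvaly : fderiv ℝ (fun q => (Dx r q ⬝ᵥ Dy r q)
        * (Real.sqrt ((Dx r q ⬝ᵥ Dx r q) * (Dy r q ⬝ᵥ Dy r q)))⁻¹) p (0, 1)
      = (Dy (Dx r) p ⬝ᵥ Dy r p + Dx r p ⬝ᵥ Dy (Dy r) p) / Real.sqrt (I11 r p * I22 r p)
        - I12 r p * (I11 r p * (Dy (Dy r) p ⬝ᵥ Dy r p + Dy r p ⬝ᵥ Dy (Dy r) p)
            + I22 r p * (Dy (Dx r) p ⬝ᵥ Dx r p + Dx r p ⬝ᵥ Dy (Dx r) p))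
          / (2 * Real.sqrt (I11 r p * I22 r p) ^ 3) := by
    rw [hF.fderiv]
    simp only [ContinuousLinearMap.add_apply, ContinuousLinearMap.smul_apply, smul_eq_mul]
    rw [fderiv_dot haD hbD, fderiv_dot haD haD, fderiv_dot hbD hbD]
    simp only [Dx, Dy, I11, I12, I22]
    ring
  -- the eventual equality coming from `hcos`
  have heqF : (fun q => Real.cos (ω q)) =ᶠ[nhds p]
      (fun q => (Dx r q ⬝ᵥ Dy r q)
        * (Real.sqrt ((Dx r q ⬝ᵥ Dx r q) * (Dy r q ⬝ᵥ Dy r q)))⁻¹) := by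
    filter_upwards [hpU] with q hq
    rw [hcos q hq, div_eq_mul_inv]
    rfl
  have hfde : fderiv ℝ (fun q => Real.cos (ω q)) p
      = fderiv ℝ (fun q => (Dx r q ⬝ᵥ Dy r q)
        * (Real.sqrt ((Dx r q ⬝ᵥ Dx r q) * (Dy r q ⬝ᵥ Dy r q)))⁻¹) p := heqF.fderiv_eq
  have hcosD : HasFDerivAt (fun q => Real.cos (ω q))
      (-Real.sin (ω p) • fderiv ℝ ω p) p := hωD.hasFDerivAt.cos
  have h1x : -Real.sin (ω p) * Dx ω p
      = (Dx (Dx r) p ⬝ᵥ Dy r p + Dx r p ⬝ᵥ Dx (Dy r) p) / Real.sqrt (I11 r p * I22 r p)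
        - I12 r p * (I11 r p * (Dx (Dy r) p ⬝ᵥ Dy r p + Dy r p ⬝ᵥ Dx (Dy r) p)
            + I22 r p * (Dx (Dx r) p ⬝ᵥ Dx r p + Dx r p ⬝ᵥ Dx (Dx r) p))
          / (2 * Real.sqrt (I11 r p * I22 r p) ^ 3) := by
    have h2 : fderiv ℝ (fun q => Real.cos (ω q)) p (1,0) = -Real.sin (ω p) * Dx ω p := by
      rw [hcosD.fderiv]
      simp [Dx]
    rw [← h2, hfde, hvalx]
  have h1y : -Real.sin (ω p) * Dy ω p
      = (Dy (Dx r) p ⬝ᵥ Dy r p + Dx r p ⬝ᵥ Dy (Dy r) p) / Real.sqrt (I11 r p * I22 r p)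
        - I12 r p * (I11 r p * (Dy (Dy r) p ⬝ᵥ Dy r p + Dy r p ⬝ᵥ Dy (Dy r) p)
            + I22 r p * (Dy (Dx r) p ⬝ᵥ Dx r p + Dx r p ⬝ᵥ Dy (Dx r) p))
          / (2 * Real.sqrt (I11 r p * I22 r p) ^ 3) := by
    have h2 : fderiv ℝ (fun q => Real.cos (ω q)) p (0,1) = -Real.sin (ω p) * Dy ω p := by
      rw [hcosD.fderiv]
      simp [Dy]
    rw [← h2, hfde, hvaly]
  -- abstract the square roots
  obtain ⟨sA, hsApos, hsA2⟩ : ∃ s : ℝ, 0 < s ∧ I11 r p = s^2 :=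
    ⟨Real.sqrt (I11 r p), Real.sqrt_pos.2 hA, (Real.sq_sqrt hA.le).symm⟩
  obtain ⟨sB, hsBpos, hsB2⟩ : ∃ s : ℝ, 0 < s ∧ I22 r p = s^2 :=
    ⟨Real.sqrt (I22 r p), Real.sqrt_pos.2 hB, (Real.sq_sqrt hB.le).symm⟩
  obtain ⟨sD, hsDpos, hsD2⟩ : ∃ s : ℝ, 0 < s ∧ Δdet r p = s^2 :=
    ⟨Real.sqrt (Δdet r p), Real.sqrt_pos.2 hΔp, (Real.sq_sqrt hΔp.le).symm⟩
  have hsqA : Real.sqrt (I11 r p) = sA := by rw [hsA2, Real.sqrt_sq hsApos.le]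
  have hsqB : Real.sqrt (I22 r p) = sB := by rw [hsB2, Real.sqrt_sq hsBpos.le]
  have hsqD : Real.sqrt (Δdet r p) = sD := by rw [hsD2, Real.sqrt_sq hsDpos.le]
  have hsqAB : Real.sqrt (I11 r p * I22 r p) = sA * sB := by
    rw [Real.sqrt_mul hA.le, hsqA, hsqB]
  have hsApos' : (0:ℝ) < sA := hsApos
  -- the sine of the angle
  have hsinpos : 0 < Real.sin (ω p) := Real.sin_pos_of_pos_of_lt_pi (hω0 p hp) (hωπ p hp)
  have hsinne : Real.sin (ω p) ≠ 0 := hsinpos.ne'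
  have hDrel : sD^2 = sA^2 * sB^2 - I12 r p ^ 2 := by
    rw [← hsD2, ← hsA2, ← hsB2]
    rfl
  have hsin : Real.sin (ω p) = sD / (sA * sB) := by
    have h1 : Real.sin (ω p)^2 = (sD / (sA * sB))^2 := by
      have h2 : Real.sin (ω p)^2 = 1 - Real.cos (ω p)^2 := by
        linear_combination Real.sin_sq_add_cos_sq (ω p)
      rw [h2, hcos p hp, hsqAB, div_pow, div_pow, hDrel]
      field_simp
    have hnn : 0 ≤ sD / (sA * sB) := le_of_lt (div_pos hsDpos (mul_pos hsApos hsBpos))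
    rw [← Real.sqrt_sq hsinpos.le, h1, Real.sqrt_sq hnn]
  -- isolate the derivatives of ω
  rw [hsqAB] at h1x h1y
  rw [hDxy] at h1x
  have hDxω : Dx ω p
      = -((Dx (Dx r) p ⬝ᵥ Dy r p + Dx r p ⬝ᵥ Dy (Dx r) p) / (sA * sB)
        - I12 r p * (I11 r p * (Dy (Dx r) p ⬝ᵥ Dy r p + Dy r p ⬝ᵥ Dy (Dx r) p)
            + I22 r p * (Dx (Dx r) p ⬝ᵥ Dx r p + Dx r p ⬝ᵥ Dx (Dx r) p))
          / (2 * (sA * sB) ^ 3)) / Real.sin (ω p) := by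
    rw [eq_div_iff hsinne]
    linear_combination -h1x
  have hDyω : Dy ω p
      = -((Dy (Dx r) p ⬝ᵥ Dy r p + Dx r p ⬝ᵥ Dy (Dy r) p) / (sA * sB)
        - I12 r p * (I11 r p * (Dy (Dy r) p ⬝ᵥ Dy r p + Dy r p ⬝ᵥ Dy (Dy r) p)
            + I22 r p * (Dy (Dx r) p ⬝ᵥ Dx r p + Dx r p ⬝ᵥ Dy (Dx r) p))
          / (2 * (sA * sB) ^ 3)) / Real.sin (ω p) := by
    rw [eq_div_iff hsinne]
    linear_combination -h1y
  -- the rpow identities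
  have h32A : (I11 r p) ^ ((3:ℝ)/2) = I11 r p * sA := by
    rw [show (3:ℝ)/2 = 1 + 1/2 by norm_num, Real.rpow_add hA, Real.rpow_one,
      ← Real.sqrt_eq_rpow, hsqA]
  have h32B : (I22 r p) ^ ((3:ℝ)/2) = I22 r p * sB := by
    rw [show (3:ℝ)/2 = 1 + 1/2 by norm_num, Real.rpow_add hB, Real.rpow_one,
      ← Real.sqrt_eq_rpow, hsqB]
  have hsAne : sA ≠ 0 := hsApos.ne'
  have hsBne : sB ≠ 0 := hsBpos.ne'
  have hsDne : sD ≠ 0 := hsDpos.ne'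
  constructor
  · -- x relation
    rw [hDxω, hsin]
    simp only [π1, κg1, nvec]
    rw [triple_smul, triple_cross, h32A, hsqA, hsqB, hsqD]
    rw [hsA2, hsB2, hsD2]
    simp only [I12, Dx, Dy]
    rw [show fderiv ℝ r p ((1:ℝ),(0:ℝ)) ⬝ᵥ fderiv ℝ r p ((1:ℝ),(0:ℝ)) = sA^2 from hsA2]
    simp only [dotProduct_comm (fderiv ℝ (Dx r) p ((1:ℝ), (0:ℝ))) (fderiv ℝ r p ((1:ℝ), (0:ℝ))),
      dotProduct_comm (fderiv ℝ (Dx r) p ((0:ℝ), (1:ℝ))) (fderiv ℝ r p ((1:ℝ), (0:ℝ))),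
      dotProduct_comm (fderiv ℝ (Dx r) p ((0:ℝ), (1:ℝ))) (fderiv ℝ r p ((0:ℝ), (1:ℝ))),
      dotProduct_comm (fderiv ℝ (Dy r) p ((0:ℝ), (1:ℝ))) (fderiv ℝ r p ((1:ℝ), (0:ℝ))),
      dotProduct_comm (fderiv ℝ (Dy r) p ((0:ℝ), (1:ℝ))) (fderiv ℝ r p ((0:ℝ), (1:ℝ))),
      dotProduct_comm (fderiv ℝ r p ((0:ℝ), (1:ℝ))) (fderiv ℝ r p ((1:ℝ), (0:ℝ)))]
    field_simp
    ring
  · -- y relation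
    rw [hDyω, hsin]
    simp only [π2, κg2, nvec]
    rw [triple_smul, triple_cross, h32B, hsqA, hsqB, hsqD]
    rw [hsA2, hsB2, hsD2]
    simp only [I12, Dx, Dy]
    rw [show fderiv ℝ r p ((0:ℝ),(1:ℝ)) ⬝ᵥ fderiv ℝ r p ((0:ℝ),(1:ℝ)) = sB^2 from hsB2]
    simp only [dotProduct_comm (fderiv ℝ (Dx r) p ((1:ℝ), (0:ℝ))) (fderiv ℝ r p ((1:ℝ), (0:ℝ))),
      dotProduct_comm (fderiv ℝ (Dx r) p ((0:ℝ), (1:ℝ))) (fderiv ℝ r p ((1:ℝ), (0:ℝ))),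
      dotProduct_comm (fderiv ℝ (Dx r) p ((0:ℝ), (1:ℝ))) (fderiv ℝ r p ((0:ℝ), (1:ℝ))),
      dotProduct_comm (fderiv ℝ (Dy r) p ((0:ℝ), (1:ℝ))) (fderiv ℝ r p ((1:ℝ), (0:ℝ))),
      dotProduct_comm (fderiv ℝ (Dy r) p ((0:ℝ), (1:ℝ))) (fderiv ℝ r p ((0:ℝ), (1:ℝ))),
      dotProduct_comm (fderiv ℝ r p ((0:ℝ), (1:ℝ))) (fderiv ℝ r p ((1:ℝ), (0:ℝ)))]
    field_simp
    ring
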